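/- arXiv:1612.04801 — 2 statements merged into one kernel-verified Lean document; each statement's English description precedes it below -/
import Mathlib

section
/- Let f: Δ^{n_1} ∨ ... ∨ Δ^{n_k} → Δ^{m_1} ∨ ... ∨ Δ^{m_k} be a morphism of necklaces of the form f = f_1 ∨ ... ∨ f_k in which exactly one f_p is a simplicial codegeneracy Δ^{n_p} → Δ^{n_p - 1} and all other f_i are identities (a type (ii) morphism). Then the induced map P₁(f): {0,1}^N → {0,1}^{N-1} (N = |V_T - J_T|) is either a cubical co-connection functor (s_1,...,s_N) ↦ (s_1,...,s_{j-1}, max(s_j, s_{j+1}), s_{j+2},...,s_N), which happens exactly when the collapsed vertex maps to a non-joint of the target, or a cubical codegeneracy functor (s_1,...,s_N) ↦ (s_1,...,s_{j-1}, s_{j+1},...,s_N), which happens exactly when the collapsed vertex maps to a joint. -/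
/-! Combinatorial model of necklaces (wedges of simplices glued end to end),
encoded by the totally ordered vertex set `Fin (m+1)` together with the
subset `J` of joints (containing the first and last vertex); beads are the
intervals between consecutive joints. -/

structure Necklace where
  m : ℕ
  J : Finset (Fin (m + 1))
  zero_mem : 0 ∈ J
  last_mem : Fin.last m ∈ J

namespace Necklace

/-- Two vertices lie in a common bead. -/
def SameBead (T : Necklace) (v w : Fin (T.m + 1)) : Prop :=
  ∃ a b : Fin (T.m + 1), a ∈ T.J ∧ b ∈ T.J ∧ (∀ c ∈ T.J, c ≤ a ∨ b ≤ c) ∧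
    a ≤ v ∧ v ≤ b ∧ a ≤ w ∧ w ≤ b

/-- A morphism of necklaces: a vertex-level monotone map preserving the first
and last vertices and mapping each bead into a single bead.  (Such data is
equivalent to a simplicial map of necklaces preserving endpoints.) -/
structure Hom (T T' : Necklace) where
  f : Fin (T.m + 1) → Fin (T'.m + 1)
  mono : Monotone f
  map_zero : f 0 = 0
  map_last : f (Fin.last T.m) = Fin.last T'.m
  bead : ∀ v w, SameBead T v w → SameBead T' (f v) (f w)

/-- Identity morphism. -/
def Hom.id (T : Necklace) : Hom T T :=
  ⟨_root_.id, monotone_id, rfl, rfl, fun _ _ h => h⟩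

/-- Composition of morphisms of necklaces. -/
def Hom.comp {T T' T'' : Necklace} (g : Hom T' T'') (h : Hom T T') : Hom T T'' :=
  ⟨g.f ∘ h.f, g.mono.comp h.mono,
    by simp [Function.comp, h.map_zero, g.map_zero],
    by simp [Function.comp, h.map_last, g.map_last],
    fun v w hb => g.bead _ _ (h.bead v w hb)⟩

/-- The set of non-joint vertices. -/
def nonJoints (T : Necklace) : Finset (Fin (T.m + 1)) := Finset.univ \ T.J

/-- The number of non-joint vertices, `N = |V_T - J_T|`. -/
def N (T : Necklace) : ℕ := T.nonJoints.card

/-- Enumeration of the non-joint vertices in increasing order. -/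
noncomputable def enum (T : Necklace) : Fin T.N ≃o {x // x ∈ T.nonJoints} :=
  T.nonJoints.orderIsoOfFin rfl

/-- The subset of vertices encoded by a cube-vertex `s : Fin (N T) → Bool`
(the joints together with the non-joints whose coordinate is `true`). -/
noncomputable def subsetOf (T : Necklace) (s : Fin T.N → Bool) : Finset (Fin (T.m + 1)) :=
  T.J ∪ (Finset.univ.filter (fun i => s i = true)).image (fun i => (T.enum i : Fin (T.m + 1)))

/-- The functor `P₁(g) : {0,1}^{N T} → {0,1}^{N T'}` induced by a morphism of
necklaces, expressed on vertices of the cubes via indicator sequences. -/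
noncomputable def P1 {T T' : Necklace} (g : Hom T T') (s : Fin T.N → Bool) :
    Fin T'.N → Bool :=
  fun i' => decide ((T'.enum i' : Fin (T'.m + 1)) ∈ (T.subsetOf s).image g.f)

/-- Type (i) morphisms: injective with `|V' - J'| = |V - J| + 1`. -/
def TypeI {T T' : Necklace} (g : Hom T T') : Prop :=
  Function.Injective g.f ∧ T'.N = T.N + 1

/-- Type (ii) morphisms: a wedge of identities and exactly one simplicial
codegeneracy; vertex-theoretically, a surjection collapsing exactly one pair of
consecutive vertices, not both of which are joints, mapping joints bijectively
onto joints. -/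
def TypeII {T T' : Necklace} (g : Hom T T') : Prop :=
  Function.Surjective g.f ∧ Finset.image g.f T.J = T'.J ∧ Set.InjOn g.f (T.J : Set _) ∧
  ∃ v : Fin T.m, g.f v.castSucc = g.f v.succ ∧ ¬(v.castSucc ∈ T.J ∧ v.succ ∈ T.J) ∧
    ∀ a b, g.f a = g.f b → a = b ∨ ({a, b} : Finset _) = {v.castSucc, v.succ}

/-- Type (iii) morphisms: collapse of a `Δ¹` bead (both of whose endpoints are
joints) to a point, injective elsewhere. -/
def TypeIII {T T' : Necklace} (g : Hom T T') : Prop :=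
  Function.Surjective g.f ∧ Finset.image g.f T.J = T'.J ∧
  ∃ v : Fin T.m, g.f v.castSucc = g.f v.succ ∧ v.castSucc ∈ T.J ∧ v.succ ∈ T.J ∧
    ∀ a b, g.f a = g.f b → a = b ∨ ({a, b} : Finset _) = {v.castSucc, v.succ}

/-- `g` is an identity morphism of necklaces. -/
def IsIdentity {T T' : Necklace} (g : Hom T T') : Prop :=
  T = T' ∧ ∀ v, ((g.f v : ℕ) = (v : ℕ))

/-- Compositions of morphisms of types (i), (ii), (iii). -/
inductive IsGenComp : ∀ {T T' : Necklace}, Hom T T' → Prop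
  | of {T T'} (g : Hom T T') : TypeI g ∨ TypeII g ∨ TypeIII g → IsGenComp g
  | comp {T T' T''} (g : Hom T T') (g' : Hom T' T'') :
      IsGenComp g → IsGenComp g' → IsGenComp (g'.comp g)

/-- Compositions of `n` morphisms of type (i). -/
inductive IsCompI : ∀ {T T' : Necklace}, Hom T T' → ℕ → Prop
  | of {T T'} (g : Hom T T') : TypeI g → IsCompI g 1
  | comp {T T' T''} (g : Hom T T') (g' : Hom T' T'') {n n' : ℕ} :
      IsCompI g n → IsCompI g' n' → IsCompI (g'.comp g) (n + n')

/-- The standard simplex `Δᵖ` regarded as a necklace with one bead. -/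
def simplex (p : ℕ) : Necklace :=
  ⟨p, {0, Fin.last p}, by simp, by simp⟩

end Necklace

/-- The cubical co-connection map `{0,1}^{N+1} → {0,1}^N`,
`(s_1,…,s_{N+1}) ↦ (s_1,…,s_{j-1}, max(s_j,s_{j+1}), s_{j+2},…,s_{N+1})`. -/
def cubConn {N : ℕ} (j : Fin N) (s : Fin (N + 1) → Bool) (i : Fin N) : Bool :=
  if (i : ℕ) < (j : ℕ) then s i.castSucc
  else if (i : ℕ) = (j : ℕ) then (s i.castSucc || s i.succ)
  else s i.succ

/-- The cubical codegeneracy map `{0,1}^{N+1} → {0,1}^N` forgetting the `j`-th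
coordinate. -/
def cubDegen {N : ℕ} (j : Fin (N + 1)) (s : Fin (N + 1) → Bool) (i : Fin N) : Bool :=
  s (j.succAbove i)

/-! `g` sends joints to joints, so `P₁(g)` only sees non-joints: a coordinate `k` of the source
cube contributes to coordinate `i` of the target iff `g` sends the `k`-th non-joint of `T` to the
`i`-th non-joint of `T'`. Let `u` be a non-joint vertex of the collapsed pair (`v + 1` when both
are non-joints) and `p` its index. Off `u`, `g` is injective and sends non-joints to non-joints
(the other vertex of the pair is a joint, or has the same image as `u`); hence it maps the non-joints other than `u` strictly monotonically onto those of
`T'`, i.e. as `p.succAbove`, a strictly monotone self-map of `Fin N` being the identity.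
Coordinate `p` is then merged into coordinate `p - 1` when `g u` is a non-joint (co-connection),
and forgotten when `g u` is a joint (codegeneracy). -/

lemma cubConn_eq_true_iff {N : ℕ} (j : Fin N) (s : Fin (N + 1) → Bool) (i : Fin N) :
    cubConn j s i = true ↔ (s j.succ = true ∧ j = i) ∨ s (j.succ.succAbove i) = true := by
  rcases lt_trichotomy i j with h | rfl | h
  · rw [Fin.succAbove_succ_of_le _ _ h.le]
    simp [cubConn, Fin.lt_def.mp h, h.ne']
  · simp [cubConn, or_comm]
  · rw [Fin.succAbove_succ_of_lt _ _ h]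
    simp [cubConn, h.ne, (Fin.lt_def.mp h).not_gt, Nat.ne_of_gt (Fin.lt_def.mp h)]

namespace Necklace

variable {T T' : Necklace}

@[simp]
lemma mem_nonJoints {x : Fin (T.m + 1)} : x ∈ T.nonJoints ↔ x ∉ T.J := by
  simp [nonJoints]

lemma enum_not_mem_J (k : Fin T.N) : (T.enum k : Fin (T.m + 1)) ∉ T.J :=
  mem_nonJoints.mp (T.enum k).2

lemma enum_val_injective : Function.Injective fun k : Fin T.N => (T.enum k : Fin (T.m + 1)) :=
  Subtype.val_injective.comp T.enum.injective

lemma P1_eq_true_iff (g : Hom T T') (hJ : ∀ x ∈ T.J, g.f x ∈ T'.J) (s : Fin T.N → Bool)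
    (i : Fin T'.N) :
    P1 g s i = true ↔ ∃ k, s k = true ∧ g.f (T.enum k) = T'.enum i := by
  simp only [P1, subsetOf, decide_eq_true_iff, Finset.mem_image, Finset.mem_union,
    Finset.mem_filter, Finset.mem_univ, true_and]
  constructor
  · rintro ⟨x, hx | ⟨k, hk, rfl⟩, hgx⟩
    · exact absurd (hgx ▸ hJ x hx) (enum_not_mem_J i)
    · exact ⟨k, hk, hgx⟩
  · rintro ⟨k, hk, hgk⟩
    exact ⟨_, Or.inr ⟨k, hk, rfl⟩, hgk⟩

lemma map_enum_comp_eq_enum (g : Hom T T') {ι : Fin T'.N → Fin T.N} (hι : StrictMono ι)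
    (hnj : ∀ i, g.f (T.enum (ι i)) ∉ T'.J)
    (hinj : Function.Injective fun i => g.f (T.enum (ι i))) (i : Fin T'.N) :
    g.f (T.enum (ι i)) = T'.enum i := by
  let φ : Fin T'.N → Fin T'.N := fun i =>
    T'.enum.symm ⟨g.f (T.enum (ι i)), mem_nonJoints.mpr (hnj i)⟩
  have hφ : StrictMono φ :=
    (T'.enum.symm.monotone.comp fun _ _ h => g.mono (T.enum.monotone (hι.monotone h)))
      |>.strictMono_of_injective fun a b h => hinj (congrArg Subtype.val (T'.enum.symm.injective h))
  simpa [φ] using congrArg (fun k => (T'.enum k : Fin (T'.m + 1))) hφ.apply_eq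

lemma map_enum_cast_succAbove (g : Hom T T') (hN : T.N = T'.N + 1) (p : Fin (T'.N + 1))
    (hinj : Set.InjOn g.f {(T.enum (Fin.cast hN.symm p) : Fin (T.m + 1))}ᶜ)
    (hnj : ∀ x ∉ T.J, x ≠ T.enum (Fin.cast hN.symm p) → g.f x ∉ T'.J) (i : Fin T'.N) :
    g.f (T.enum (Fin.cast hN.symm (p.succAbove i))) = T'.enum i := by
  have hne : ∀ i, (T.enum (Fin.cast hN.symm (p.succAbove i)) : Fin (T.m + 1)) ≠
      T.enum (Fin.cast hN.symm p) := fun i h =>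
    p.succAbove_ne i (Fin.cast_injective _ (enum_val_injective h))
  exact map_enum_comp_eq_enum g ((Fin.cast_strictMono _).comp p.strictMono_succAbove)
    (fun i => hnj _ (enum_not_mem_J _) (hne i))
    (fun a b h => p.succAbove_right_injective (Fin.cast_injective _
      (enum_val_injective (hinj (hne a) (hne b) h)))) i

lemma P1_cast_eq_true_iff (g : Hom T T') (hJ : ∀ x ∈ T.J, g.f x ∈ T'.J) (hN : T.N = T'.N + 1)
    (p : Fin (T'.N + 1)) (hinj : Set.InjOn g.f {(T.enum (Fin.cast hN.symm p) : Fin (T.m + 1))}ᶜ)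
    (hnj : ∀ x ∉ T.J, x ≠ T.enum (Fin.cast hN.symm p) → g.f x ∉ T'.J)
    (s : Fin (T'.N + 1) → Bool) (i : Fin T'.N) :
    P1 g (fun t => s (Fin.cast hN t)) i = true ↔
      (s p = true ∧ g.f (T.enum (Fin.cast hN.symm p)) = T'.enum i) ∨
        s (p.succAbove i) = true := by
  rw [P1_eq_true_iff g hJ, ← (finCongr hN.symm).exists_congr_right, Fin.exists_iff_succAbove p]
  simp only [finCongr_apply, Fin.cast_cast, Fin.cast_eq_self,
    map_enum_cast_succAbove g hN p hinj hnj, Subtype.coe_inj, EmbeddingLike.apply_eq_iff_eq,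
    exists_eq_right]

lemma exists_enum_castSucc_succ {n : ℕ} (hN : T.N = n + 1) {v : Fin T.m} (hc : v.castSucc ∉ T.J)
    (hs : v.succ ∉ T.J) :
    ∃ j : Fin n, T.enum (Fin.cast hN.symm j.castSucc) = v.castSucc ∧
      T.enum (Fin.cast hN.symm j.succ) = v.succ := by
  set a := T.enum.symm ⟨v.castSucc, mem_nonJoints.mpr hc⟩
  set b := T.enum.symm ⟨v.succ, mem_nonJoints.mpr hs⟩
  have hab : a ⋖ b := CovBy.of_image (T.enum.toOrderEmbedding.trans (OrderEmbedding.subtype _))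
    (by simp [a, b, Fin.covBy_iff])
  have hb : (a : ℕ) + 1 = b := Nat.covBy_iff_add_one_eq.mp (Fin.covBy_iff.mp hab)
  refine ⟨⟨a, by omega⟩, ?_, ?_⟩
  · rw [show Fin.cast hN.symm (Fin.castSucc ⟨a, _⟩) = a from rfl]
    simp [a]
  · rw [show Fin.cast hN.symm (Fin.succ ⟨a, _⟩) = b from Fin.ext (by simp [hb])]
    simp [b]

section TypeII

variable (g : Hom T T') {v : Fin T.m}

lemma injOn_compl_of_mem_pair
    (hinj2 : ∀ a b, g.f a = g.f b → a = b ∨ ({a, b} : Finset _) = {v.castSucc, v.succ})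
    {u : Fin (T.m + 1)} (hu : u = v.castSucc ∨ u = v.succ) : Set.InjOn g.f {u}ᶜ := by
  intro a ha b hb h
  refine (hinj2 a b h).resolve_right fun hab => ?_
  have hu' : u ∈ ({a, b} : Finset _) := hab ▸ by rcases hu with rfl | rfl <;> simp
  rcases Finset.mem_insert.mp hu' with rfl | hub
  exacts [ha rfl, hb (Finset.mem_singleton.mp hub).symm]

lemma mem_J_or_mem_pair_of_map_mem_J (hJ : Finset.image g.f T.J = T'.J)
    (hinj2 : ∀ a b, g.f a = g.f b → a = b ∨ ({a, b} : Finset _) = {v.castSucc, v.succ})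
    {x : Fin (T.m + 1)} (hx : g.f x ∈ T'.J) :
    x ∈ T.J ∨ (x = v.castSucc ∨ x = v.succ) ∧ (v.castSucc ∈ T.J ∨ v.succ ∈ T.J) := by
  obtain ⟨a, ha, hax⟩ := Finset.mem_image.mp (hJ ▸ hx)
  rcases hinj2 a x hax with rfl | hpair
  · exact Or.inl ha
  · have hmem : ∀ y ∈ ({a, x} : Finset _), y = v.castSucc ∨ y = v.succ := by
      simp [hpair]
    refine Or.inr ⟨hmem x (by simp), ?_⟩
    rcases hmem a (by simp) with rfl | rfl
    exacts [Or.inl ha, Or.inr ha]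

lemma P1_eq_cubConn_of_map_not_mem_J (hJ : Finset.image g.f T.J = T'.J)
    (hcol : g.f v.castSucc = g.f v.succ)
    (hinj2 : ∀ a b, g.f a = g.f b → a = b ∨ ({a, b} : Finset _) = {v.castSucc, v.succ})
    (hN : T.N = T'.N + 1) (hc : g.f v.castSucc ∉ T'.J) :
    ∃ j : Fin T'.N, ∀ (s : Fin (T'.N + 1) → Bool) (i : Fin T'.N),
      P1 g (fun t => s (Fin.cast hN t)) i = cubConn j s i := by
  have hJ' : ∀ x ∈ T.J, g.f x ∈ T'.J := fun x hx => hJ ▸ Finset.mem_image_of_mem g.f hx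
  obtain ⟨j, hjc, hjs⟩ :=
    exists_enum_castSucc_succ hN (fun h => hc (hJ' _ h)) (fun h => hc (hcol ▸ hJ' _ h))
  have hinj := injOn_compl_of_mem_pair g hinj2 (Or.inr hjs)
  have hnj : ∀ x ∉ T.J, x ≠ T.enum (Fin.cast hN.symm j.succ) → g.f x ∉ T'.J := by
    rw [hjs]
    intro x hx hxs hgx
    rcases mem_J_or_mem_pair_of_map_mem_J g hJ hinj2 hgx with h | ⟨rfl | rfl, -⟩
    exacts [hx h, hc hgx, hxs rfl]
  have hgj : g.f (T.enum (Fin.cast hN.symm j.succ)) = T'.enum j := by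
    rw [hjs, ← hcol, ← hjc, ← Fin.succAbove_succ_self]
    exact map_enum_cast_succAbove g hN _ hinj hnj j
  refine ⟨j, fun s i => Bool.eq_iff_iff.mpr ?_⟩
  rw [P1_cast_eq_true_iff g hJ' hN _ hinj hnj, cubConn_eq_true_iff, hgj,
    enum_val_injective.eq_iff]

lemma P1_eq_cubDegen_of_map_mem_J (hJ : Finset.image g.f T.J = T'.J)
    (hcol : g.f v.castSucc = g.f v.succ) (hnotJ : ¬(v.castSucc ∈ T.J ∧ v.succ ∈ T.J))
    (hinj2 : ∀ a b, g.f a = g.f b → a = b ∨ ({a, b} : Finset _) = {v.castSucc, v.succ})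
    (hN : T.N = T'.N + 1) (hc : g.f v.castSucc ∈ T'.J) :
    ∃ j : Fin (T'.N + 1), ∀ (s : Fin (T'.N + 1) → Bool) (i : Fin T'.N),
      P1 g (fun t => s (Fin.cast hN t)) i = cubDegen j s i := by
  have hJ' : ∀ x ∈ T.J, g.f x ∈ T'.J := fun x hx => hJ ▸ Finset.mem_image_of_mem g.f hx
  obtain ⟨u, w, hu, hw, hpair⟩ : ∃ u w, u ∉ T.J ∧ w ∈ T.J ∧
      (u = v.castSucc ∧ w = v.succ ∨ u = v.succ ∧ w = v.castSucc) := by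
    rcases mem_J_or_mem_pair_of_map_mem_J g hJ hinj2 hc with h | ⟨-, h | h⟩ <;> try exact
      ⟨_, _, fun h' => hnotJ ⟨h, h'⟩, h, Or.inr ⟨rfl, rfl⟩⟩
    exact ⟨_, _, fun h' => hnotJ ⟨h', h⟩, h, Or.inl ⟨rfl, rfl⟩⟩
  let p := Fin.cast hN (T.enum.symm ⟨u, mem_nonJoints.mpr hu⟩)
  have hp : (T.enum (Fin.cast hN.symm p) : Fin (T.m + 1)) = u := by simp [p]
  have hinj := injOn_compl_of_mem_pair g hinj2 (u := T.enum (Fin.cast hN.symm p)) (by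
    rw [hp]; tauto)
  have hnj : ∀ x ∉ T.J, x ≠ T.enum (Fin.cast hN.symm p) → g.f x ∉ T'.J := by
    rw [hp]
    intro x hx hxu hgx
    rcases mem_J_or_mem_pair_of_map_mem_J g hJ hinj2 hgx with h | ⟨hx', -⟩
    · exact hx h
    · rcases hpair with ⟨rfl, rfl⟩ | ⟨rfl, rfl⟩ <;> rcases hx' with rfl | rfl <;> tauto
  have hgu : g.f u ∈ T'.J := by rcases hpair with ⟨rfl, -⟩ | ⟨rfl, -⟩ <;> simp_all
  refine ⟨p, fun s i => Bool.eq_iff_iff.mpr ?_⟩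
  rw [P1_cast_eq_true_iff g hJ' hN p hinj hnj, cubDegen, hp]
  have hne : g.f u ≠ T'.enum i := fun h => enum_not_mem_J i (h ▸ hgu)
  simp [hne]

end TypeII

end Necklace

open Necklace in
theorem P1_of_typeII_is_connection_or_degeneracy_general {T T' : Necklace}
    (g : Necklace.Hom T T') (v : Fin T.m)
    (hJ : Finset.image g.f T.J = T'.J)
    (hcol : g.f v.castSucc = g.f v.succ)
    (hnotJ : ¬(v.castSucc ∈ T.J ∧ v.succ ∈ T.J))
    (hinj2 : ∀ a b, g.f a = g.f b → a = b ∨ ({a, b} : Finset _) = {v.castSucc, v.succ})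
    (hN : T.N = T'.N + 1) :
    (g.f v.castSucc ∉ T'.J →
      ∃ j : Fin T'.N, ∀ (s : Fin (T'.N + 1) → Bool) (i : Fin T'.N),
        Necklace.P1 g (fun t => s (Fin.cast hN t)) i = cubConn j s i) ∧
    (g.f v.castSucc ∈ T'.J →
      ∃ j : Fin (T'.N + 1), ∀ (s : Fin (T'.N + 1) → Bool) (i : Fin T'.N),
        Necklace.P1 g (fun t => s (Fin.cast hN t)) i = cubDegen j s i) :=
  ⟨P1_eq_cubConn_of_map_not_mem_J g hJ hcol hinj2 hN,
    P1_eq_cubDegen_of_map_mem_J g hJ hcol hnotJ hinj2 hN⟩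

open Necklace in
/-- For a type (ii) morphism of necklaces `g` (a wedge of
identities with exactly one simplicial codegeneracy, i.e. a surjection collapsing
exactly one pair of consecutive vertices `v, v+1`, not both joints, and mapping
joints bijectively onto joints), with `N T = N T' + 1`, the induced map
`P₁(g) : {0,1}^{N} → {0,1}^{N-1}` is a cubical co-connection map precisely when
the collapsed vertex maps to a non-joint, and a cubical codegeneracy map
precisely when it maps to a joint. -/
theorem P1_of_typeII_is_connection_or_degeneracy {T T' : Necklace}
    (g : Necklace.Hom T T') (v : Fin T.m)
    (hsurj : Function.Surjective g.f)
    (hJ : Finset.image g.f T.J = T'.J)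
    (hJinj : Set.InjOn g.f (T.J : Set (Fin (T.m + 1))))
    (hcol : g.f v.castSucc = g.f v.succ)
    (hnotJ : ¬(v.castSucc ∈ T.J ∧ v.succ ∈ T.J))
    (hinj2 : ∀ a b, g.f a = g.f b → a = b ∨ ({a, b} : Finset _) = {v.castSucc, v.succ})
    (hN : T.N = T'.N + 1) :
    (g.f v.castSucc ∉ T'.J →
      ∃ j : Fin T'.N, ∀ (s : Fin (T'.N + 1) → Bool) (i : Fin T'.N),
        Necklace.P1 g (fun t => s (Fin.cast hN t)) i = cubConn j s i) ∧
    (g.f v.castSucc ∈ T'.J →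
      ∃ j : Fin (T'.N + 1), ∀ (s : Fin (T'.N + 1) → Bool) (i : Fin T'.N),
        Necklace.P1 g (fun t => s (Fin.cast hN t)) i = cubDegen j s i) :=
  P1_of_typeII_is_connection_or_degeneracy_general g v hJ hcol hnotJ hinj2 hN
end

section
/- Every non-identity injective morphism of necklaces t: R → R' is a composition of injective morphisms f with |V_{codomain} - J_{codomain}| - |V_{domain} - J_{domain}| = 1 (type (i) morphisms). In particular, the number of such factors equals |V_{R'} - J_{R'}| - |V_R - J_R|. -/
/-! An injective morphism `t : T → T'` is strictly monotone, sends non-joints to non-joints,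
and hits every joint of `T'`; hence `N T ≤ N T'`, with equality only for the identity.
If `N T < N T'`, a type (i) factor can be split off. Either some joint `j` of `T` lands on a
non-joint, and `t` factors through `T` with `j` demoted to an ordinary vertex; or `t` maps
joints to joints, so it misses some vertex `u` of `T'`, and `t` factors through the necklace
spanned by the other vertices. Induction on `N T' - N T` finishes the proof. -/

namespace Necklace

variable {T T' : Necklace}

theorem SameBead.symm {v w : Fin (T.m + 1)} (h : T.SameBead v w) : T.SameBead w v := by
  obtain ⟨a, b, ha, hb, hab, hav, hvb, haw, hwb⟩ := h
  exact ⟨a, b, ha, hb, hab, haw, hwb, hav, hvb⟩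

theorem sameBead_iff_of_le {v w : Fin (T.m + 1)} (hvw : v ≤ w) :
    T.SameBead v w ↔ ∀ c ∈ T.J, ¬(v < c ∧ c < w) := by
  constructor
  · rintro ⟨a, b, -, -, hab, hav, -, -, hwb⟩ c hc ⟨hvc, hcw⟩
    rcases hab c hc with hca | hbc
    · exact (hca.trans hav).not_gt hvc
    · exact (hwb.trans hbc).not_gt hcw
  · intro h
    let A := T.J.filter (· ≤ v)
    let B := T.J.filter (w ≤ ·)
    have hA : A.Nonempty := ⟨0, Finset.mem_filter.2 ⟨T.zero_mem, Fin.zero_le v⟩⟩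
    have hB : B.Nonempty := ⟨_, Finset.mem_filter.2 ⟨T.last_mem, Fin.le_last w⟩⟩
    obtain ⟨haJ, hav⟩ := Finset.mem_filter.1 (A.max'_mem hA)
    obtain ⟨hbJ, hwb⟩ := Finset.mem_filter.1 (B.min'_mem hB)
    refine ⟨A.max' hA, B.min' hB, haJ, hbJ, fun c hc => ?_, hav, hvw.trans hwb,
      hav.trans hvw, hwb⟩
    by_cases hcv : c ≤ v
    · exact Or.inl (A.le_max' c (Finset.mem_filter.2 ⟨hc, hcv⟩))
    by_cases hwc : w ≤ c
    · exact Or.inr (B.min'_le c (Finset.mem_filter.2 ⟨hc, hwc⟩))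
    exact absurd ⟨not_le.1 hcv, not_le.1 hwc⟩ (h c hc)

theorem sameBead_castSucc_succ (i : Fin T.m) : T.SameBead i.castSucc i.succ := by
  refine (sameBead_iff_of_le (Fin.castSucc_le_succ i)).2 fun c _ ⟨h₁, h₂⟩ => ?_
  rw [Fin.lt_def, Fin.val_castSucc] at h₁
  rw [Fin.lt_def, Fin.val_succ] at h₂
  omega

theorem N_add_card_J (T : Necklace) : T.N + T.J.card = T.m + 1 := by
  rw [N, nonJoints, Finset.card_sdiff_add_card_eq_card (Finset.subset_univ _), Finset.card_univ,
    Fintype.card_fin]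

namespace Hom

theorem ext {g h : Hom T T'} (H : g.f = h.f) : g = h := by
  cases g; cases h; cases H; rfl

theorem not_lt_lt_of_sameBead (t : Hom T T') {v w : Fin (T.m + 1)} (hvw : v ≤ w)
    (h : T.SameBead v w) {c : Fin (T'.m + 1)} (hc : c ∈ T'.J) : ¬(t.f v < c ∧ c < t.f w) :=
  (sameBead_iff_of_le (t.mono hvw)).1 (t.bead v w h) c hc

theorem exists_eq_of_mem_J (t : Hom T T') {c : Fin (T'.m + 1)} (hc : c ∈ T'.J) :
    ∃ v, t.f v = c := by
  by_contra! hne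
  have hstep : ∀ i : Fin T.m, t.f i.castSucc < c → t.f i.succ < c := fun i hi =>
    lt_of_le_of_ne (not_lt.1 fun hci => t.not_lt_lt_of_sameBead (Fin.castSucc_le_succ i)
      (sameBead_castSucc_succ i) hc ⟨hi, hci⟩) (hne _)
  have hzero : t.f 0 < c := t.map_zero ▸ lt_of_le_of_ne (Fin.zero_le c) (t.map_zero ▸ hne 0)
  have hlast := Fin.induction (motive := fun v => t.f v < c) hzero hstep (Fin.last T.m)
  exact (t.map_last ▸ hlast).not_ge (Fin.le_last c)

theorem map_notMem_J (t : Hom T T') (hinj : Function.Injective t.f) {v : Fin (T.m + 1)}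
    (hv : v ∉ T.J) : t.f v ∉ T'.J := by
  obtain ⟨p, rfl⟩ := Fin.exists_succ_eq.2 (fun h : v = 0 => hv (h ▸ T.zero_mem))
  obtain ⟨q, hq⟩ :=
    Fin.exists_castSucc_eq.2 (fun h : p.succ = Fin.last T.m => hv (h ▸ T.last_mem))
  have hqp : (q : ℕ) = p + 1 := by simpa [Fin.ext_iff] using hq
  have hpv : p.castSucc < p.succ := Fin.castSucc_lt_succ (i := p)
  have hvq : p.succ < q.succ := by rw [← hq]; exact Fin.castSucc_lt_succ (i := q)
  have hbead : T.SameBead p.castSucc q.succ := by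
    refine (sameBead_iff_of_le (hpv.trans hvq).le).2 fun c hc ⟨h₁, h₂⟩ => hv ?_
    rw [Fin.lt_def, Fin.val_castSucc] at h₁
    rw [Fin.lt_def, Fin.val_succ] at h₂
    have : c = p.succ := Fin.ext (by rw [Fin.val_succ]; omega)
    exact this ▸ hc
  have hsm : StrictMono t.f := t.mono.strictMono_of_injective hinj
  exact fun hJ => t.not_lt_lt_of_sameBead (hpv.trans hvq).le hbead hJ ⟨hsm hpv, hsm hvq⟩

theorem J_subset_image (t : Hom T T') (hinj : Function.Injective t.f) :
    T'.J ⊆ T.J.image t.f := fun c hc => by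
  obtain ⟨v, rfl⟩ := t.exists_eq_of_mem_J hc
  exact Finset.mem_image_of_mem _ (not_not.1 fun hv => t.map_notMem_J hinj hv hc)

/-- Conversely, a monotone endpoint-preserving map is a morphism as soon as every joint of the
target is the image of a joint: a bead's image then contains no joint in its interior. -/
def ofJSubsetImage (f : Fin (T.m + 1) → Fin (T'.m + 1)) (mono : Monotone f)
    (map_zero : f 0 = 0) (map_last : f (Fin.last T.m) = Fin.last T'.m)
    (hJ : T'.J ⊆ T.J.image f) : Hom T T' where
  f := f
  mono := mono
  map_zero := map_zero
  map_last := map_last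
  bead v w h := by
    wlog hvw : v ≤ w generalizing v w
    · exact (this w v h.symm (le_of_not_ge hvw)).symm
    refine (sameBead_iff_of_le (mono hvw)).2 fun c hc ⟨h₁, h₂⟩ => ?_
    obtain ⟨d, hd, rfl⟩ := Finset.mem_image.1 (hJ hc)
    exact (sameBead_iff_of_le hvw).1 h d hd ⟨mono.reflect_lt h₁, mono.reflect_lt h₂⟩

theorem N_le (t : Hom T T') (hinj : Function.Injective t.f) : T.N ≤ T'.N :=
  Finset.card_le_card_of_injOn t.f
    (fun v hv => by simpa [nonJoints] using t.map_notMem_J hinj (by simpa [nonJoints] using hv))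
    hinj.injOn

theorem N_le_of_surjective (t : Hom T T') (hsurj : Function.Surjective t.f)
    (hJ : ∀ j ∈ T.J, t.f j ∈ T'.J) : T'.N ≤ T.N :=
  Finset.card_le_card_of_surjOn t.f fun c hc => by
    obtain ⟨v, rfl⟩ := hsurj c
    exact ⟨v, by simpa [nonJoints] using mt (hJ v) (by simpa [nonJoints] using hc), rfl⟩

theorem isIdentity_of_N_eq (t : Hom T T') (hinj : Function.Injective t.f) (hN : T'.N = T.N) :
    IsIdentity t := by
  have hJ := t.J_subset_image hinj
  have hm : T.m + 1 ≤ T'.m + 1 := by simpa using Fintype.card_le_of_injective t.f hinj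
  have hcard : T'.J.card ≤ T.J.card := (Finset.card_le_card hJ).trans Finset.card_image_le
  have e := N_add_card_J T
  have e' := N_add_card_J T'
  have hJJ : T.J.image t.f = T'.J :=
    (Finset.eq_of_subset_of_card_le hJ (Finset.card_image_le.trans (by omega))).symm
  have hmm : T.m = T'.m := by omega
  clear hJ hm hcard e e' hN
  obtain ⟨m, J, h0, hl⟩ := T
  obtain ⟨m', J', h0', hl'⟩ := T'
  obtain rfl : m = m' := hmm
  have hid : t.f = _root_.id := by
    refine ((t.mono.strictMono_of_injective hinj).range_inj strictMono_id).1 ?_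
    rw [Set.range_id, (Finite.injective_iff_surjective.1 hinj).range_eq]
  obtain rfl : J = J' := by simpa [hid] using hJJ
  exact ⟨rfl, fun v => by rw [hid]; rfl⟩

end Hom

def eraseJoint (T : Necklace) (j : Fin (T.m + 1)) (hj0 : j ≠ 0) (hjl : j ≠ Fin.last T.m) :
    Necklace :=
  ⟨T.m, T.J.erase j, Finset.mem_erase.2 ⟨hj0.symm, T.zero_mem⟩,
    Finset.mem_erase.2 ⟨hjl.symm, T.last_mem⟩⟩

theorem N_eraseJoint {j : Fin (T.m + 1)} (hj : j ∈ T.J) (hj0 : j ≠ 0)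
    (hjl : j ≠ Fin.last T.m) : (T.eraseJoint j hj0 hjl).N = T.N + 1 := by
  have e := N_add_card_J T
  have e' : (T.eraseJoint j hj0 hjl).N + (T.J.erase j).card = T.m + 1 := N_add_card_J _
  have hcard := Finset.card_erase_add_one hj
  omega

def Hom.toEraseJoint (j : Fin (T.m + 1)) (hj0 : j ≠ 0) (hjl : j ≠ Fin.last T.m) :
    Hom T (T.eraseJoint j hj0 hjl) :=
  Hom.ofJSubsetImage _root_.id monotone_id rfl rfl fun c hc =>
    Finset.mem_image.2 ⟨c, Finset.mem_of_mem_erase hc, rfl⟩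

theorem Hom.exists_typeI_comp_of_map_notMem_J (t : Hom T T') (hinj : Function.Injective t.f)
    {j : Fin (T.m + 1)} (hj : j ∈ T.J) (htj : t.f j ∉ T'.J) :
    ∃ (T₂ : Necklace) (g : Hom T T₂) (t₂ : Hom T₂ T'),
      TypeI g ∧ Function.Injective t₂.f ∧ t₂.comp g = t := by
  have hj0 : j ≠ 0 := by rintro rfl; exact htj (t.map_zero ▸ T'.zero_mem)
  have hjl : j ≠ Fin.last T.m := by rintro rfl; exact htj (t.map_last ▸ T'.last_mem)
  have hJ : T'.J ⊆ (T.eraseJoint j hj0 hjl).J.image t.f := fun c hc => by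
    obtain ⟨d, hd, rfl⟩ := Finset.mem_image.1 (t.J_subset_image hinj hc)
    exact Finset.mem_image_of_mem _ (Finset.mem_erase.2 ⟨by rintro rfl; exact htj hc, hd⟩)
  exact ⟨_, Hom.toEraseJoint j hj0 hjl, Hom.ofJSubsetImage t.f t.mono t.map_zero t.map_last hJ,
    ⟨Function.injective_id, N_eraseJoint hj hj0 hjl⟩, hinj, Hom.ext rfl⟩

section restrict

variable (s : Finset (Fin (T.m + 1))) (hs : T.J ⊆ s)

def restrictEmb : Fin (s.card - 1 + 1) ↪o Fin (T.m + 1) :=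
  s.orderEmbOfFin (Nat.sub_add_cancel (Finset.card_pos.2 ⟨0, hs T.zero_mem⟩)).symm

theorem range_restrictEmb : Set.range (restrictEmb s hs) = s :=
  Finset.range_orderEmbOfFin _ _

theorem restrictEmb_zero : restrictEmb s hs 0 = 0 := by
  rw [show (0 : Fin (s.card - 1 + 1)) = ⟨0, Nat.succ_pos _⟩ from rfl, restrictEmb,
    Finset.orderEmbOfFin_zero _ (Nat.succ_pos _)]
  exact le_antisymm (s.min'_le 0 (hs T.zero_mem)) (Fin.zero_le _)

theorem restrictEmb_last : restrictEmb s hs (Fin.last _) = Fin.last T.m := by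
  rw [show Fin.last (s.card - 1) = ⟨s.card - 1 + 1 - 1, by omega⟩ from Fin.ext (by simp),
    restrictEmb, Finset.orderEmbOfFin_last _ (Nat.succ_pos _)]
  exact le_antisymm (Fin.le_last _) (s.le_max' _ (hs T.last_mem))

/-- The necklace spanned by a vertex set `s ⊇ J`: its beads are the traces of those of `T`. -/
def restrict : Necklace :=
  ⟨s.card - 1, Finset.univ.filter (restrictEmb s hs · ∈ T.J),
    by simp [restrictEmb_zero, T.zero_mem], by simp [restrictEmb_last, T.last_mem]⟩

theorem mem_restrict_J {i : Fin (s.card - 1 + 1)} :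
    i ∈ (restrict s hs).J ↔ restrictEmb s hs i ∈ T.J :=
  Finset.mem_filter.trans (and_iff_right (Finset.mem_univ i))

theorem image_restrictEmb_J : (restrict s hs).J.image (restrictEmb s hs) = T.J := by
  ext c
  refine ⟨fun hc => ?_, fun hc => ?_⟩
  · obtain ⟨i, hi, rfl⟩ := Finset.mem_image.1 hc
    exact (mem_restrict_J s hs).1 hi
  · obtain ⟨i, rfl⟩ : c ∈ Set.range (restrictEmb s hs) := by
      rw [range_restrictEmb]; exact hs hc
    exact Finset.mem_image.2 ⟨i, (mem_restrict_J s hs).2 hc, rfl⟩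

def Hom.ofRestrict : Hom (restrict s hs) T :=
  Hom.ofJSubsetImage (restrictEmb s hs) (restrictEmb s hs).monotone (restrictEmb_zero s hs)
    (restrictEmb_last s hs) (image_restrictEmb_J s hs).ge

theorem N_restrict : (restrict s hs).N + sᶜ.card = T.N := by
  have e := N_add_card_J T
  have e' : (restrict s hs).N + (restrict s hs).J.card = s.card - 1 + 1 := N_add_card_J _
  have hJ : ((restrict s hs).J.image (restrictEmb s hs)).card = (restrict s hs).J.card :=
    Finset.card_image_of_injective _ (restrictEmb s hs).injective
  rw [image_restrictEmb_J] at hJ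
  have hs₀ : 0 < s.card := Finset.card_pos.2 ⟨0, hs T.zero_mem⟩
  have hsc := Finset.card_compl s
  have hsu : s.card ≤ T.m + 1 := by simpa using Finset.card_le_univ s
  simp only [Fintype.card_fin] at hsc
  omega

theorem Hom.exists_comp_ofRestrict (t : Hom T' T) (hinj : Function.Injective t.f)
    (ht : ∀ v, t.f v ∈ s) :
    ∃ t₁ : Hom T' (restrict s hs),
      Function.Injective t₁.f ∧ (Hom.ofRestrict s hs).comp t₁ = t := by
  have hrange : ∀ v, t.f v ∈ Set.range (restrictEmb s hs) := fun v => by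
    rw [range_restrictEmb]; exact ht v
  choose f hf using hrange
  have hmono : Monotone f := fun v w h =>
    (restrictEmb s hs).le_iff_le.1 (by rw [hf, hf]; exact t.mono h)
  have h0 : f 0 = 0 := (restrictEmb s hs).injective (by rw [hf, t.map_zero, restrictEmb_zero])
  have hl : f (Fin.last _) = Fin.last _ :=
    (restrictEmb s hs).injective (by rw [hf, t.map_last, restrictEmb_last])
  have hJ : (restrict s hs).J ⊆ T'.J.image f := fun c hc => by
    obtain ⟨d, hd, hdc⟩ :=
      Finset.mem_image.1 (t.J_subset_image hinj ((mem_restrict_J s hs).1 hc))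
    exact Finset.mem_image.2 ⟨d, hd, (restrictEmb s hs).injective (by rw [hf, hdc])⟩
  refine ⟨Hom.ofJSubsetImage f hmono h0 hl hJ, fun v w h => hinj ?_, Hom.ext (funext hf)⟩
  rw [← hf, ← hf]
  exact congrArg _ h

end restrict

theorem Hom.exists_comp_typeI_of_notMem_range (t : Hom T T') (hinj : Function.Injective t.f)
    {u : Fin (T'.m + 1)} (hu : ∀ v, t.f v ≠ u) :
    ∃ (T₂ : Necklace) (t₁ : Hom T T₂) (g : Hom T₂ T'),
      Function.Injective t₁.f ∧ TypeI g ∧ g.comp t₁ = t := by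
  have hs : T'.J ⊆ Finset.univ.erase u := fun c hc => by
    obtain ⟨v, rfl⟩ := t.exists_eq_of_mem_J hc
    exact Finset.mem_erase.2 ⟨hu v, Finset.mem_univ _⟩
  obtain ⟨t₁, ht₁, rfl⟩ := t.exists_comp_ofRestrict _ hs hinj fun v =>
    Finset.mem_erase.2 ⟨hu v, Finset.mem_univ _⟩
  refine ⟨_, t₁, _, ht₁, ⟨(restrictEmb _ hs).injective, ?_⟩, rfl⟩
  simpa [add_comm] using (N_restrict _ hs).symm

theorem Hom.isCompI_of_N_eq_add (n : ℕ) :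
    ∀ {T T' : Necklace} (t : Hom T T'), Function.Injective t.f → T'.N = T.N + (n + 1) →
      IsCompI t (n + 1) := by
  induction n with
  | zero => exact fun t hinj hN => IsCompI.of t ⟨hinj, hN⟩
  | succ n ih =>
    intro T T' t hinj hN
    by_cases hJ : ∃ j ∈ T.J, t.f j ∉ T'.J
    · obtain ⟨j, hj, htj⟩ := hJ
      obtain ⟨T₂, g, t₂, hg, ht₂, rfl⟩ := t.exists_typeI_comp_of_map_notMem_J hinj hj htj
      rw [show n + 1 + 1 = 1 + (n + 1) by omega]
      exact IsCompI.comp g t₂ (IsCompI.of g hg) (ih t₂ ht₂ (by rw [hg.2]; omega))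
    · push Not at hJ
      obtain ⟨u, hu⟩ : ∃ u, ∀ v, t.f v ≠ u := by
        by_contra! hsurj
        have := t.N_le_of_surjective hsurj hJ
        omega
      obtain ⟨T₂, t₁, g, ht₁, hg, rfl⟩ := t.exists_comp_typeI_of_notMem_range hinj hu
      exact IsCompI.comp t₁ g (ih t₁ ht₁ (by rw [hg.2] at hN; omega)) (IsCompI.of g hg)

end Necklace

open Necklace in
/-- Every non-identity injective morphism of necklaces is a
composition of type (i) morphisms, and the number of factors equals
`|V_{R'} - J_{R'}| - |V_R - J_R|`. -/
theorem injective_necklace_hom_factorization {R R' : Necklace} (t : Necklace.Hom R R')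
    (hinj : Function.Injective t.f) (ht : ¬ Necklace.IsIdentity t) :
    ∃ n : ℕ, Necklace.IsCompI t n ∧ R.N + n = R'.N := by
  obtain hlt | heq := (t.N_le hinj).lt_or_eq
  · obtain ⟨n, hn⟩ := Nat.exists_eq_add_of_lt hlt
    exact ⟨n + 1, t.isCompI_of_N_eq_add n hinj hn, hn.symm⟩
  · exact absurd (t.isIdentity_of_N_eq hinj heq.symm) ht
end
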